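/- Entailment in propositional definite Horn logic is expressible by an N2RPQ over a polynomially-sized graph: given a set T = {φ_1,…,φ_n} of definite Horn clauses over variables V with φ_1 = (g → g), the ABox A = A_1 ∪ A_2 (where A_1 contains, for each rule φ_i = v_1 ∧ … ∧ v_m → v_{m+1}, the chain p_{v_{m+1}}(e^i_{m+1}, e^i_m), …, p_{v_1}(e^i_1, e^i_0), s(e^i_0, f), and A_2 contains t(e^i_{l-1}, e^j_{n+1}) whenever the l-th body variable of φ_i equals the head of φ_j) and the expressions E_1 = (⋃_{v∈V} p_v · t · p_v) · s and E_i = (⋃_{v∈V} p_v · t · p_v) · (⟨E_{i-1}⟩ · ⋃_{v∈V} p_v)* · s for i > 1 satisfy: T ⊨ g if and only if (e^1_1, f) is an answer of the query E_{|V|}(x,y) over the interpretation determined by A (with empty TBox). -/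

import Mathlib

set_option autoImplicit false

namespace Paper

abbrev CN := ℕ
abbrev RN := ℕ
abbrev Ind := ℕ

structure Interp where
  Dom : Type
  nonempty : Nonempty Dom
  ind : Ind → Dom
  cn : CN → Set Dom
  rn : RN → Dom → Dom → Prop

inductive ERole where
  | name (p : RN)
  | inv (p : RN)
deriving DecidableEq

def ERole.sem (I : Interp) : ERole → I.Dom → I.Dom → Prop
  | .name p => I.rn p
  | .inv p => fun x y => I.rn p y x

def ERole.einv : ERole → ERole
  | .name p => .inv p
  | .inv p => .name p

inductive Role where
  | er (r : ERole)
  | ctest (A : CN)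
  | itest (a : Ind)
deriving DecidableEq

def Role.sem (I : Interp) : Role → I.Dom → I.Dom → Prop
  | .er r => r.sem I
  | .ctest A => fun x y => x = y ∧ x ∈ I.cn A
  | .itest a => fun x y => x = I.ind a ∧ y = I.ind a

inductive NRE where
  | role (σ : Role)
  | comp (E₁ E₂ : NRE)
  | union (E₁ E₂ : NRE)
  | star (E : NRE)
  | test (E : NRE)

def NRE.sem (I : Interp) : NRE → I.Dom → I.Dom → Prop
  | .role σ => σ.sem I
  | .comp E₁ E₂ => fun x z => ∃ y, E₁.sem I x y ∧ E₂.sem I y z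
  | .union E₁ E₂ => fun x y => E₁.sem I x y ∨ E₂.sem I x y
  | .star E => Relation.ReflTransGen (E.sem I)
  | .test E => fun x y => x = y ∧ ∃ z, E.sem I x z

def Role.NoITest : Role → Prop
  | .itest _ => False
  | _ => True

def NRE.NoITest : NRE → Prop
  | .role σ => σ.NoITest
  | .comp E₁ E₂ => E₁.NoITest ∧ E₂.NoITest
  | .union E₁ E₂ => E₁.NoITest ∧ E₂.NoITest
  | .star E => E.NoITest
  | .test E => E.NoITest

def NRE.NestFree : NRE → Prop
  | .role _ => True
  | .comp E₁ E₂ => E₁.NestFree ∧ E₂.NestFree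
  | .union E₁ E₂ => E₁.NestFree ∧ E₂.NestFree
  | .star E => E.NestFree
  | .test _ => False

structure NNFA where
  n : ℕ
  St : Fin n → Type
  init : ∀ i, St i
  final : ∀ i, Set (St i)
  transRole : ∀ i, St i → Role → St i → Prop
  transTest : ∀ i, St i → Fin n → St i → Prop
  test_gt : ∀ i s j s', transTest i s j s' → i < j

inductive NNFA.Accept (M : NNFA) (I : Interp) :
    ∀ i : Fin M.n, M.St i → Set (M.St i) → I.Dom → I.Dom → Prop where
  | refl {i : Fin M.n} {s : M.St i} {F : Set (M.St i)} {o : I.Dom} :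
      s ∈ F → NNFA.Accept M I i s F o o
  | step {i : Fin M.n} {s s' : M.St i} {F : Set (M.St i)} {σ : Role} {o o' o'' : I.Dom} :
      M.transRole i s σ s' → σ.sem I o o' → NNFA.Accept M I i s' F o' o'' →
      NNFA.Accept M I i s F o o''
  | test {i : Fin M.n} {s s' : M.St i} {F : Set (M.St i)} {j : Fin M.n} {o o₁ o'' : I.Dom} :
      M.transTest i s j s' → NNFA.Accept M I j (M.init j) (M.final j) o o₁ →
      NNFA.Accept M I i s' F o o'' → NNFA.Accept M I i s F o o''

def NNFA.NoITest (M : NNFA) : Prop :=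
  ∀ i (s : M.St i) (a : Ind) (s' : M.St i), ¬ M.transRole i s (.itest a) s'

inductive RTree (L : Type) where
  | leaf (l : L)
  | one (l : L) (c : RTree L)
  | two (l : L) (c₁ c₂ : RTree L)

def RTree.label {L : Type} : RTree L → L
  | .leaf l => l
  | .one l _ => l
  | .two l _ _ => l

def RTree.leaves {L : Type} : RTree L → List L
  | .leaf l => [l]
  | .one _ c => c.leaves
  | .two _ c₁ c₂ => c₁.leaves ++ c₂.leaves

def NNFA.IsRun (M : NNFA) (I : Interp) : RTree ((Σ i, M.St i) × I.Dom) → Prop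
  | .leaf _ => True
  | .one l c => M.IsRun I c ∧
      ∃ (σ : Role) (s' : M.St l.1.1) (o' : I.Dom),
        M.transRole l.1.1 l.1.2 σ s' ∧ σ.sem I l.2 o' ∧ c.label = (⟨l.1.1, s'⟩, o')
  | .two l c₁ c₂ => M.IsRun I c₁ ∧ M.IsRun I c₂ ∧
      ∃ (j : Fin M.n) (s' : M.St l.1.1),
        M.transTest l.1.1 l.1.2 j s' ∧ c₁.label = (⟨l.1.1, s'⟩, l.2) ∧
        c₂.label = (⟨j, M.init j⟩, l.2)

def NNFA.FullRun (M : NNFA) (I : Interp) (i : Fin M.n) (o₁ : I.Dom) (s₁ : M.St i)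
    (o₂ : I.Dom) (s₂ : M.St i) (t : RTree ((Σ j, M.St j) × I.Dom)) : Prop :=
  M.IsRun I t ∧ t.label = (⟨i, s₁⟩, o₁) ∧ ((⟨i, s₂⟩ : Σ j, M.St j), o₂) ∈ t.leaves ∧
  ∀ l ∈ t.leaves, l ≠ ((⟨i, s₂⟩ : Σ j, M.St j), o₂) → l.1.2 ∈ M.final l.1.1

end Paper
namespace Paper

/-- A propositional definite Horn clause. -/
structure HClause where
  body : List ℕ
  head : ℕ

/-- Derivability (truth in the least model) for definite Horn theories. -/
inductive Deriv (T : List HClause) : ℕ → Prop where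
  | step (c : HClause) : c ∈ T → (∀ v ∈ c.body, Deriv T v) → Deriv T c.head

/-- The interpretation determined by the ABox A₁ ∪ A₂ of the reduction:
`some (i,j)` is the constant e^{i+1}_j, `none` is f; role 0 is s, role 1 is t,
and role v+2 is p_v. -/
def hornI (T : List HClause) : Interp where
  Dom := Option (ℕ × ℕ)
  nonempty := ⟨none⟩
  ind := fun _ => none
  cn := fun _ => ∅
  rn := fun r x y =>
    (r = 0 ∧ ∃ i, i < T.length ∧ x = some (i, 0) ∧ y = none) ∨
    (r = 1 ∧ ∃ i j ci cj l, T[i]? = some ci ∧ T[j]? = some cj ∧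
      ci.body[l]? = some cj.head ∧ x = some (i, l) ∧ y = some (j, cj.body.length + 1)) ∨
    (∃ i cc, T[i]? = some cc ∧
      ((∃ l v, cc.body[l]? = some v ∧ r = v + 2 ∧ x = some (i, l + 1) ∧ y = some (i, l)) ∨
       (r = cc.head + 2 ∧ x = some (i, cc.body.length + 1) ∧ y = some (i, cc.body.length))))

def sNRE : NRE := .role (.er (.name 0))
def tNRE : NRE := .role (.er (.name 1))
def pNRE (v : ℕ) : NRE := .role (.er (.name (v + 2)))

def bigUnionNRE : List NRE → NRE
  | [] => .role (.ctest 0)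
  | [E] => E
  | E :: rest => .union E (bigUnionNRE rest)

def pvtpv (V : List ℕ) : NRE :=
  bigUnionNRE (V.map fun v => .comp (pNRE v) (.comp tNRE (pNRE v)))

def pUnion (V : List ℕ) : NRE := bigUnionNRE (V.map pNRE)

/-- `hornE V k` is the expression E_{k+1} of the reduction. -/
def hornE (V : List ℕ) : ℕ → NRE
  | 0 => .comp (pvtpv V) sNRE
  | k + 1 => .comp (pvtpv V) (.comp (.star (.comp (.test (hornE V k)) (pUnion V))) sNRE)

end Paper

/-!
Write `DerivWithin T n v` when `v` has a proof tree of depth at most `n`. The atoms derivable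
within `n` rounds form an increasing chain of subsets of `V` which is constant once it stalls, so
it is stable after `|V|` rounds: `T ⊨ g` iff `g` is derivable within `|V|` rounds.

In the graph, the node `some (i, l + 1)` lies just above the `l`-th body atom of clause `i`. A
`p_v · t · p_v` step leads from it exactly to the top `some (j, |body j|)` of the body of a clause
`j` whose head is that atom; the starred part of `hornE V (k + 1)` walks down this body one atom at
a time, testing `hornE V k` at each node, and `s` can only be taken at the bottom `some (j, 0)`.
By induction on `k`, `hornE V k` relates `some (i, l + 1)` to `none` iff the `l`-th body atom of
clause `i` is derivable within `k + 1` rounds, and the clause `g → g` at index `0` turns this into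
the theorem.
-/

theorem Finset.exists_le_card_succ_eq_of_monotone {α : Type*} {s : ℕ → Finset α}
    (hs : Monotone s) {U : Finset α} (hU : ∀ n, s n ⊆ U) :
    ∃ n ≤ U.card, s (n + 1) = s n := by
  by_contra! hne
  have hgrow : ∀ n ≤ U.card + 1, n ≤ (s n).card := by
    intro n
    induction n with
    | zero => simp
    | succ n ih =>
      intro hn
      have hlt := Finset.card_lt_card
        ((hs (Nat.le_add_right n 1)).ssubset_of_ne (hne n (by omega)).symm)
      have := ih (by omega)
      omega
  have := (hgrow _ le_rfl).trans (Finset.card_le_card (hU (U.card + 1)))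
  omega

open Relation in
theorem reflTransGen_descend_iff {R : Option (ℕ × ℕ) → Option (ℕ × ℕ) → Prop}
    {Q : ℕ → ℕ → Prop}
    (hR : ∀ x y, R x y ↔ ∃ i l, x = some (i, l + 1) ∧ y = some (i, l) ∧ Q i l)
    {i a : ℕ} {y : Option (ℕ × ℕ)} :
    ReflTransGen R (some (i, a)) y ↔
      ∃ b ≤ a, y = some (i, b) ∧ ∀ l, b ≤ l → l < a → Q i l := by
  constructor
  · suffices ∀ x, ReflTransGen R x y → ∀ a, x = some (i, a) →
        ∃ b ≤ a, y = some (i, b) ∧ ∀ l, b ≤ l → l < a → Q i l from fun h => this _ h a rfl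
    intro x h
    induction h using ReflTransGen.head_induction_on with
    | refl => exact fun a hx => ⟨a, le_rfl, hx, fun l h1 h2 => by omega⟩
    | head hxz _ ih =>
      rintro a rfl
      obtain ⟨i', l, hx, rfl, hQ⟩ := (hR _ _).mp hxz
      simp only [Option.some.injEq, Prod.mk.injEq] at hx
      obtain ⟨rfl, rfl⟩ := hx
      obtain ⟨b, hb, rfl, hbQ⟩ := ih l rfl
      refine ⟨b, by omega, rfl, fun l' h1 h2 => ?_⟩
      rcases Nat.lt_or_ge l' l with h | h
      · exact hbQ l' h1 h
      · obtain rfl : l' = l := by omega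
        exact hQ
  · rintro ⟨b, hb, rfl, hQ⟩
    obtain ⟨d, rfl⟩ := Nat.exists_eq_add_of_le hb
    induction d with
    | zero => exact .refl
    | succ d ih =>
      refine .head ((hR _ _).mpr ⟨i, b + d, rfl, rfl, hQ _ (by omega) (by omega)⟩) ?_
      exact ih (by omega) fun l h1 h2 => hQ l h1 (by omega)

namespace Paper

theorem bigUnionNRE_sem {I : Interp} (hI : I.cn 0 = ∅) {x y : I.Dom} :
    ∀ L : List NRE, (bigUnionNRE L).sem I x y ↔ ∃ E ∈ L, E.sem I x y
  | [] => by simp [bigUnionNRE, NRE.sem, Role.sem, hI]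
  | [E] => by simp [bigUnionNRE]
  | E :: F :: L => by simp [bigUnionNRE, NRE.sem, bigUnionNRE_sem hI (F :: L)]

variable {T : List HClause}

def DerivWithin (T : List HClause) : ℕ → ℕ → Prop
  | 0, _ => False
  | n + 1, v => ∃ c ∈ T, c.head = v ∧ ∀ w ∈ c.body, DerivWithin T n w

theorem DerivWithin.mono {n m v : ℕ} (hnm : n ≤ m) (h : DerivWithin T n v) :
    DerivWithin T m v := by
  induction n generalizing m v with
  | zero => exact h.elim
  | succ n ih =>
    obtain ⟨m, rfl⟩ := Nat.exists_eq_add_of_lt hnm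
    obtain ⟨c, hc, hv, hb⟩ := h
    exact ⟨c, hc, hv, fun w hw => ih (by omega) (hb w hw)⟩

theorem deriv_iff_exists_derivWithin {v : ℕ} : Deriv T v ↔ ∃ n, DerivWithin T n v := by
  constructor
  · intro h
    induction h with
    | step c hc _ ih =>
      have hbody : ∀ᶠ n in Filter.atTop, ∀ w ∈ {w | w ∈ c.body}, DerivWithin T n w :=
        (List.finite_toSet c.body).eventually_all.mpr fun w hw =>
          let ⟨n, hn⟩ := ih w hw
          Filter.eventually_atTop.mpr ⟨n, fun _ hm => hn.mono hm⟩
      obtain ⟨n, hn⟩ := Filter.eventually_atTop.mp hbody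
      exact ⟨n + 1, c, hc, rfl, hn n le_rfl⟩
  · rintro ⟨n, h⟩
    induction n generalizing v with
    | zero => exact h.elim
    | succ n ih =>
      obtain ⟨c, hc, rfl, hb⟩ := h
      exact .step c hc fun w hw => ih (hb w hw)

theorem DerivWithin.of_stable {n : ℕ}
    (hstab : ∀ v, DerivWithin T (n + 1) v → DerivWithin T n v) :
    ∀ {m v}, DerivWithin T m v → DerivWithin T n v
  | 0, _, h => h.elim
  | _ + 1, _, ⟨c, hc, hv, hb⟩ => hstab _ ⟨c, hc, hv, fun w hw => of_stable hstab (hb w hw)⟩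

theorem DerivWithin.length_of_heads_mem {V : List ℕ} (hV : ∀ c ∈ T, c.head ∈ V) {m v : ℕ}
    (h : DerivWithin T m v) : DerivWithin T V.length v := by
  classical
  let derived n := V.toFinset.filter (DerivWithin T n)
  have hmono : Monotone derived := fun n m hnm v hv => by
    simp only [derived, Finset.mem_filter] at hv ⊢
    exact ⟨hv.1, hv.2.mono hnm⟩
  obtain ⟨n, hn, hsucc⟩ :=
    Finset.exists_le_card_succ_eq_of_monotone hmono fun n => Finset.filter_subset _ _
  have hstab : ∀ v, DerivWithin T (n + 1) v → DerivWithin T n v := by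
    intro v hv
    obtain ⟨c, hc, rfl, -⟩ := id hv
    have : c.head ∈ derived (n + 1) :=
      Finset.mem_filter.mpr ⟨List.mem_toFinset.mpr (hV c hc), hv⟩
    exact (Finset.mem_filter.mp (hsucc ▸ this)).2
  exact (of_stable hstab h).mono (hn.trans (List.toFinset_card_le V))

theorem deriv_iff_derivWithin_length {V : List ℕ} (hV : ∀ c ∈ T, c.head ∈ V) {v : ℕ} :
    Deriv T v ↔ DerivWithin T V.length v := by
  rw [deriv_iff_exists_derivWithin]
  exact ⟨fun ⟨_, h⟩ => h.length_of_heads_mem hV, fun h => ⟨_, h⟩⟩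

def BodyVar (T : List HClause) (i l v : ℕ) : Prop := ∃ c, T[i]? = some c ∧ c.body[l]? = some v

theorem forall_lt_length_bodyVar_iff {j : ℕ} {c : HClause} (hc : T[j]? = some c) {P : ℕ → Prop} :
    (∀ l, l < c.body.length → ∃ v, BodyVar T j l v ∧ P v) ↔ ∀ w ∈ c.body, P w := by
  simp only [BodyVar, hc, Option.some.injEq, exists_eq_left', List.forall_mem_iff_getElem,
    List.getElem?_eq_some_iff]
  grind

section Graph

variable {x y : (hornI T).Dom}

theorem sNRE_sem : sNRE.sem (hornI T) x y ↔ ∃ i < T.length, x = some (i, 0) ∧ y = none := by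
  simp only [sNRE, NRE.sem, Role.sem, ERole.sem, hornI]; grind

theorem hornI_rn_one : (hornI T).rn 1 x y ↔ ∃ i j ci cj l, T[i]? = some ci ∧ T[j]? = some cj ∧
      ci.body[l]? = some cj.head ∧ x = some (i, l) ∧ y = some (j, cj.body.length + 1) := by
  simp only [hornI]; grind

theorem hornI_rn_add_two {v : ℕ} : (hornI T).rn (v + 2) x y ↔ ∃ i c, T[i]? = some c ∧
      ((∃ l, c.body[l]? = some v ∧ x = some (i, l + 1) ∧ y = some (i, l)) ∨
       (c.head = v ∧ x = some (i, c.body.length + 1) ∧ y = some (i, c.body.length))) := by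
  simp only [hornI]; grind

theorem pvtpv_sem {V : List ℕ} (hV : ∀ c ∈ T, ∀ v ∈ c.body, v ∈ V) :
    (pvtpv V).sem (hornI T) x y ↔ ∃ i l j c, BodyVar T i l c.head ∧ T[j]? = some c ∧
      x = some (i, l + 1) ∧ y = some (j, c.body.length) := by
  refine (bigUnionNRE_sem (I := hornI T) rfl _).trans ?_
  simp only [List.mem_map, exists_exists_and_eq_and, NRE.sem, pNRE, tNRE, Role.sem, ERole.sem,
    hornI_rn_one, hornI_rn_add_two, BodyVar]
  constructor
  -- the first `p_v` cannot be a head edge: it ends at `some (i, |body i|)`, where no `t` starts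
  · grind
  · rintro ⟨i, l, j, c, ⟨ci, hci, hl⟩, hc, rfl, rfl⟩
    refine ⟨c.head, hV ci (List.mem_of_getElem? hci) _ (List.mem_of_getElem? hl), _,
      ⟨i, ci, hci, .inl ⟨l, hl, rfl, rfl⟩⟩, _, ⟨i, j, ci, c, l, hci, hc, hl, rfl, rfl⟩,
      j, c, hc, .inr ⟨rfl, rfl, rfl⟩⟩

theorem pUnion_sem_of_bodyVar {V : List ℕ} (hV : ∀ c ∈ T, ∀ v ∈ c.body, v ∈ V) {i l v : ℕ}
    (hv : BodyVar T i l v) : (pUnion V).sem (hornI T) (some (i, l + 1)) y ↔ y = some (i, l) := by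
  refine (bigUnionNRE_sem (I := hornI T) rfl _).trans ?_
  obtain ⟨c, hc, hl⟩ := hv
  simp only [List.mem_map, exists_exists_and_eq_and, pNRE, NRE.sem, Role.sem, ERole.sem]
  constructor
  · rintro ⟨w, -, h⟩
    grind [hornI_rn_add_two.mp h]
  · rintro rfl
    exact ⟨v, hV c (List.mem_of_getElem? hc) _ (List.mem_of_getElem? hl),
      hornI_rn_add_two.mpr ⟨i, c, hc, .inl ⟨l, hl, rfl, rfl⟩⟩⟩

theorem sNRE_sem_body_end {j : ℕ} {c : HClause} (hc : T[j]? = some c) :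
    sNRE.sem (hornI T) (some (j, c.body.length)) y ↔ y = none ∧ c.body = [] := by
  constructor
  · intro h
    obtain ⟨i, -, hend, rfl⟩ := sNRE_sem.mp h
    exact ⟨rfl, List.length_eq_zero_iff.mp (Prod.ext_iff.mp (Option.some.inj hend)).2⟩
  · rintro ⟨rfl, hnil⟩
    exact sNRE_sem.mpr ⟨j, (List.getElem?_eq_some_iff.mp hc).1, by rw [hnil]; rfl, rfl⟩

end Graph

section Expressions

variable {V : List ℕ} (hV : ∀ c ∈ T, ∀ v ∈ c.body, v ∈ V) {x y : (hornI T).Dom}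
include hV

theorem testStep_sem {E : NRE} {P : ℕ → Prop}
    (hE : ∀ x : (hornI T).Dom, (∃ z, E.sem (hornI T) x z) ↔
      ∃ i l v, BodyVar T i l v ∧ x = some (i, l + 1) ∧ P v) :
    (NRE.comp (.test E) (pUnion V)).sem (hornI T) x y ↔
      ∃ i l, x = some (i, l + 1) ∧ y = some (i, l) ∧ ∃ v, BodyVar T i l v ∧ P v := by
  simp only [NRE.sem]
  constructor
  · rintro ⟨_, ⟨rfl, hEx⟩, hy⟩
    obtain ⟨i, l, v, hv, rfl, hP⟩ := (hE _).mp hEx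
    exact ⟨i, l, rfl, (pUnion_sem_of_bodyVar hV hv).mp hy, v, hv, hP⟩
  · rintro ⟨i, l, rfl, rfl, v, hv, hP⟩
    exact ⟨_, ⟨rfl, (hE _).mpr ⟨i, l, v, hv, rfl, hP⟩⟩, (pUnion_sem_of_bodyVar hV hv).mpr rfl⟩

theorem starTestStep_comp_sNRE_sem {E : NRE} {P : ℕ → Prop}
    (hE : ∀ x : (hornI T).Dom, (∃ z, E.sem (hornI T) x z) ↔
      ∃ i l v, BodyVar T i l v ∧ x = some (i, l + 1) ∧ P v)
    {j : ℕ} {c : HClause} (hc : T[j]? = some c) :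
    (NRE.comp (.star (.comp (.test E) (pUnion V))) sNRE).sem (hornI T)
      (some (j, c.body.length)) y ↔ y = none ∧ ∀ w ∈ c.body, P w := by
  rw [← forall_lt_length_bodyVar_iff hc]
  have hdesc := fun b => reflTransGen_descend_iff (fun x y => testStep_sem hV hE (x := x) (y := y))
    (i := j) (a := c.body.length) (y := b)
  constructor
  · rintro ⟨b, hb, hs⟩
    obtain ⟨b', -, rfl, hQ⟩ := (hdesc b).mp hb
    obtain ⟨i, -, hb0, rfl⟩ := sNRE_sem.mp hs
    obtain rfl : b' = 0 := (Prod.ext_iff.mp (Option.some.inj hb0)).2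
    exact ⟨rfl, fun l hl => hQ l l.zero_le hl⟩
  · rintro ⟨rfl, hQ⟩
    exact ⟨_, (hdesc _).mpr ⟨0, Nat.zero_le _, rfl, fun l _ hl => hQ l hl⟩,
      sNRE_sem.mpr ⟨j, (List.getElem?_eq_some_iff.mp hc).1, rfl, rfl⟩⟩

theorem comp_pvtpv_sem {R : NRE} {P : ℕ → Prop}
    (hR : ∀ j c, T[j]? = some c → ∀ y : (hornI T).Dom,
      R.sem (hornI T) (some (j, c.body.length)) y ↔ y = none ∧ ∀ w ∈ c.body, P w) :
    (NRE.comp (pvtpv V) R).sem (hornI T) x y ↔ y = none ∧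
      ∃ i l v, BodyVar T i l v ∧ x = some (i, l + 1) ∧ ∃ c ∈ T, c.head = v ∧ ∀ w ∈ c.body, P w := by
  constructor
  · rintro ⟨m, hm, hmy⟩
    obtain ⟨i, l, j, c, hbody, hc, rfl, rfl⟩ := (pvtpv_sem hV).mp hm
    obtain ⟨rfl, hP⟩ := (hR j c hc y).mp hmy
    exact ⟨rfl, i, l, c.head, hbody, rfl, c, List.mem_of_getElem? hc, rfl, hP⟩
  · rintro ⟨rfl, i, l, _, hbody, rfl, c, hcT, rfl, hP⟩
    obtain ⟨j, hc⟩ := List.mem_iff_getElem?.mp hcT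
    exact ⟨_, (pvtpv_sem hV).mpr ⟨i, l, j, c, hbody, hc, rfl, rfl⟩, (hR j c hc _).mpr ⟨rfl, hP⟩⟩

theorem hornE_sem (k : ℕ) : (hornE V k).sem (hornI T) x y ↔
    y = none ∧ ∃ i l v, BodyVar T i l v ∧ x = some (i, l + 1) ∧ DerivWithin T (k + 1) v := by
  induction k generalizing x y with
  | zero =>
    refine comp_pvtpv_sem hV fun j c hc y => ?_
    rw [sNRE_sem_body_end hc, List.eq_nil_iff_forall_not_mem]
    rfl
  | succ k ih =>
    refine comp_pvtpv_sem hV fun j c hc y => starTestStep_comp_sNRE_sem hV (fun x => ?_) hc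
    simp only [ih]
    exact ⟨fun ⟨_, _, h⟩ => h, fun h => ⟨none, rfl, h⟩⟩

end Expressions

theorem horn_entailment_via_n2rpq_general (T : List HClause) (V : List ℕ) (g : ℕ)
    (hvars : ∀ c ∈ T, c.head ∈ V ∧ ∀ v ∈ c.body, v ∈ V)
    (h1 : T[0]? = some ⟨[g], g⟩) :
    Deriv T g ↔ (hornE V (V.length - 1)).sem (hornI T) (some (0, 1)) none := by
  have hg : g ∈ V := (hvars _ (List.mem_of_getElem? h1)).1
  have hlen : V.length - 1 + 1 = V.length := Nat.sub_add_cancel (List.length_pos_of_mem hg)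
  have hbody : ∀ v, BodyVar T 0 0 v ↔ v = g := by simp [BodyVar, h1, eq_comm]
  refine (deriv_iff_derivWithin_length fun c hc => (hvars c hc).1).trans
    (Iff.trans ?_ (hornE_sem (fun c hc => (hvars c hc).2) _).symm)
  rw [hlen]
  constructor
  · exact fun h => ⟨rfl, 0, 0, g, (hbody g).mpr rfl, rfl, h⟩
  · rintro ⟨-, i, l, v, hv, hx, h⟩
    obtain ⟨rfl, hl⟩ := Prod.ext_iff.mp (Option.some.inj hx)
    obtain rfl : l = 0 := by omega
    rwa [← (hbody v).mp hv]

/-- T ⊨ g iff (e¹₁, f) is an answer of E_{|V|}(x,y) over the graph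
determined by the ABox of the reduction. -/
theorem horn_entailment_via_n2rpq (T : List HClause) (V : List ℕ) (g : ℕ)
    (hnd : V.Nodup) (hg : g ∈ V)
    (hvars : ∀ c ∈ T, c.head ∈ V ∧ ∀ v ∈ c.body, v ∈ V)
    (h1 : T[0]? = some ⟨[g], g⟩) :
    Deriv T g ↔ (hornE V (V.length - 1)).sem (hornI T) (some (0, 1)) none :=
  horn_entailment_via_n2rpq_general T V g hvars h1

end Paper
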